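/- Let $1<p<q<r$, $0<\gamma<1$, $K,M\geq 0$, $L>0$, $\lambda>0$, and set $\Phi(t)=t^{p-r}K+t^{q-r}M-t^{1-r-\gamma}L$. If $\max_{t>0}\Phi(t) > \lambda N$ for some $N>0$, then there exist $0<t_1<t_0<t_2$ with $\Phi(t_1)=\lambda N=\Phi(t_2)$, $\Phi'(t_1)>0$, and $\Phi'(t_2)<0$, where $t_0$ is a maximizer of $\Phi$. -/

import Mathlib

/-!
Writing `Φ(t) = t^{1-r-γ} (t^{p+γ-1} K + t^{q+γ-1} M - L)` shows `Φ < 0` near `0`, and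
`Φ → 0` at infinity, so `Φ` crosses the positive level `λN` on both sides of `t₀`. Moreover
`Φ'(t) = t^{-r-γ} slope(t)` with `slope` antitone, so once `Φ'` is nonpositive it stays so.
Hence `Φ'` is positive at the left crossing, for otherwise `Φ` would decrease all the way to `t₀`;
symmetrically `Φ'` is negative at the right crossing.
-/

open Set Filter Topology

section SignOfAntitoneFactor

variable {Φ w F : ℝ → ℝ} {I : Set ℝ}

lemma antitoneOn_Icc_of_hasDerivAt_mul_of_nonpos (hI : I.OrdConnected)
    (hΦ : ∀ t ∈ I, HasDerivAt Φ (w t * F t) t) (hw : ∀ t ∈ I, 0 < w t) (hF : AntitoneOn F I)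
    {s b : ℝ} (hs : s ∈ I) (hb : b ∈ I) (hFs : F s ≤ 0) : AntitoneOn Φ (Icc s b) := by
  have hsub : Icc s b ⊆ I := hI.out hs hb
  refine antitoneOn_of_hasDerivWithinAt_nonpos (convex_Icc s b)
    (fun t ht => (hΦ t (hsub ht)).continuousAt.continuousWithinAt)
    (fun t ht => (hΦ t (hsub (interior_subset ht))).hasDerivWithinAt) fun t ht => ?_
  rw [interior_Icc] at ht
  have hFt : F t ≤ 0 := (hF hs (hsub (Ioo_subset_Icc_self ht)) ht.1.le).trans hFs
  exact mul_nonpos_of_nonneg_of_nonpos (hw t (hsub (Ioo_subset_Icc_self ht))).le hFt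

lemma monotoneOn_Icc_of_hasDerivAt_mul_of_nonneg (hI : I.OrdConnected)
    (hΦ : ∀ t ∈ I, HasDerivAt Φ (w t * F t) t) (hw : ∀ t ∈ I, 0 < w t) (hF : AntitoneOn F I)
    {a s : ℝ} (ha : a ∈ I) (hs : s ∈ I) (hFs : 0 ≤ F s) : MonotoneOn Φ (Icc a s) := by
  have hsub : Icc a s ⊆ I := hI.out ha hs
  refine monotoneOn_of_hasDerivWithinAt_nonneg (convex_Icc a s)
    (fun t ht => (hΦ t (hsub ht)).continuousAt.continuousWithinAt)
    (fun t ht => (hΦ t (hsub (interior_subset ht))).hasDerivWithinAt) fun t ht => ?_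
  rw [interior_Icc] at ht
  have hFt : 0 ≤ F t := hFs.trans (hF (hsub (Ioo_subset_Icc_self ht)) hs ht.2.le)
  exact mul_nonneg (hw t (hsub (Ioo_subset_Icc_self ht))).le hFt

lemma exists_mem_Ioo_eq_deriv_pos_of_hasDerivAt_mul (hI : I.OrdConnected)
    (hΦ : ∀ t ∈ I, HasDerivAt Φ (w t * F t) t) (hw : ∀ t ∈ I, 0 < w t) (hF : AntitoneOn F I)
    {a b c : ℝ} (ha : a ∈ I) (hb : b ∈ I) (hab : a ≤ b) (hc : c ∈ Ioo (Φ a) (Φ b)) :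
    ∃ t ∈ Ioo a b, Φ t = c ∧ 0 < deriv Φ t := by
  have hsub : Icc a b ⊆ I := hI.out ha hb
  obtain ⟨t, ht, hΦt⟩ := intermediate_value_Ioo hab
    (fun x hx => (hΦ x (hsub hx)).continuousAt.continuousWithinAt) hc
  have htI : t ∈ I := hsub (Ioo_subset_Icc_self ht)
  refine ⟨t, ht, hΦt, ?_⟩
  have hFt : 0 < F t := by
    by_contra! hFt
    have := antitoneOn_Icc_of_hasDerivAt_mul_of_nonpos hI hΦ hw hF htI hb hFt
      (left_mem_Icc.mpr ht.2.le) (right_mem_Icc.mpr ht.2.le) ht.2.le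
    exact (hΦt ▸ hc.2).not_ge this
  rw [(hΦ t htI).deriv]
  exact mul_pos (hw t htI) hFt

lemma exists_mem_Ioo_eq_deriv_neg_of_hasDerivAt_mul (hI : I.OrdConnected)
    (hΦ : ∀ t ∈ I, HasDerivAt Φ (w t * F t) t) (hw : ∀ t ∈ I, 0 < w t) (hF : AntitoneOn F I)
    {a b c : ℝ} (ha : a ∈ I) (hb : b ∈ I) (hab : a ≤ b) (hc : c ∈ Ioo (Φ b) (Φ a)) :
    ∃ t ∈ Ioo a b, Φ t = c ∧ deriv Φ t < 0 := by
  have hsub : Icc a b ⊆ I := hI.out ha hb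
  obtain ⟨t, ht, hΦt⟩ := intermediate_value_Ioo' hab
    (fun x hx => (hΦ x (hsub hx)).continuousAt.continuousWithinAt) hc
  have htI : t ∈ I := hsub (Ioo_subset_Icc_self ht)
  refine ⟨t, ht, hΦt, ?_⟩
  have hFt : F t < 0 := by
    by_contra! hFt
    have := monotoneOn_Icc_of_hasDerivAt_mul_of_nonneg hI hΦ hw hF ha htI hFt
      (left_mem_Icc.mpr ht.1.le) (right_mem_Icc.mpr ht.1.le) ht.1.le
    exact (hΦt ▸ hc.2).not_ge this
  rw [(hΦ t htI).deriv]
  exact mul_neg_of_pos_of_neg (hw t htI) hFt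

end SignOfAntitoneFactor

namespace NehariFibering

variable (p q r γ K M L : ℝ)

noncomputable def phi (t : ℝ) : ℝ := t ^ (p - r) * K + t ^ (q - r) * M - t ^ (1 - r - γ) * L

noncomputable def slope (t : ℝ) : ℝ :=
  (p - r) * K * t ^ (p + γ - 1) + (q - r) * M * t ^ (q + γ - 1) + (r + γ - 1) * L

variable {p q r γ K M L}

lemma phi_eq_rpow_mul {t : ℝ} (ht : 0 < t) :
    phi p q r γ K M L t = t ^ (1 - r - γ) * (t ^ (p + γ - 1) * K + t ^ (q + γ - 1) * M - L) := by
  rw [phi, show p - r = 1 - r - γ + (p + γ - 1) by ring,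
    show q - r = 1 - r - γ + (q + γ - 1) by ring, Real.rpow_add ht, Real.rpow_add ht]
  ring

lemma hasDerivAt_phi {t : ℝ} (ht : 0 < t) :
    HasDerivAt (phi p q r γ K M L) (t ^ (-r - γ) * slope p q r γ K M L t) t := by
  have hpow (e : ℝ) := Real.hasDerivAt_rpow_const (p := e) (Or.inl ht.ne')
  refine ((((hpow (p - r)).mul_const K).add ((hpow (q - r)).mul_const M)).sub
    ((hpow (1 - r - γ)).mul_const L)).congr_deriv ?_
  rw [slope, show p - r - 1 = -r - γ + (p + γ - 1) by ring,
    show q - r - 1 = -r - γ + (q + γ - 1) by ring, show 1 - r - γ - 1 = -r - γ by ring,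
    Real.rpow_add ht, Real.rpow_add ht]
  ring

lemma antitoneOn_slope (hpγ : 0 ≤ p + γ - 1) (hqγ : 0 ≤ q + γ - 1) (hpr : p ≤ r) (hqr : q ≤ r)
    (hK : 0 ≤ K) (hM : 0 ≤ M) : AntitoneOn (slope p q r γ K M L) (Ioi 0) := by
  intro s hs t _ hst
  have hp := mul_le_mul_of_nonpos_left (Real.rpow_le_rpow (le_of_lt hs) hst hpγ)
    (mul_nonpos_of_nonpos_of_nonneg (sub_nonpos.mpr hpr) hK)
  have hq := mul_le_mul_of_nonpos_left (Real.rpow_le_rpow (le_of_lt hs) hst hqγ)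
    (mul_nonpos_of_nonpos_of_nonneg (sub_nonpos.mpr hqr) hM)
  simp only [slope]
  linarith

lemma eventually_phi_neg (hpγ : 0 < p + γ - 1) (hqγ : 0 < q + γ - 1) (hL : 0 < L) :
    ∀ᶠ t in 𝓝[>] 0, phi p q r γ K M L t < 0 := by
  have hzero {e : ℝ} (he : 0 < e) : Tendsto (fun t : ℝ => t ^ e) (𝓝[>] 0) (𝓝 0) := by
    simpa [Real.zero_rpow he.ne'] using
      (Real.continuousAt_rpow_const 0 e (Or.inr he.le)).tendsto.mono_left nhdsWithin_le_nhds
  have hbracket : Tendsto (fun t : ℝ => t ^ (p + γ - 1) * K + t ^ (q + γ - 1) * M - L)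
      (𝓝[>] 0) (𝓝 (0 * K + 0 * M - L)) :=
    (((hzero hpγ).mul_const K).add ((hzero hqγ).mul_const M)).sub_const L
  rw [zero_mul, zero_mul, add_zero, zero_sub] at hbracket
  filter_upwards [hbracket.eventually (gt_mem_nhds (neg_neg_of_pos hL)), self_mem_nhdsWithin]
    with t hneg ht
  rw [phi_eq_rpow_mul ht]
  exact mul_neg_of_pos_of_neg (Real.rpow_pos_of_pos ht _) hneg

lemma tendsto_phi_atTop (hpr : p < r) (hqr : q < r) (hrγ : 1 < r + γ) :
    Tendsto (phi p q r γ K M L) atTop (𝓝 0) := by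
  have hzero {e : ℝ} (he : e < 0) : Tendsto (fun t : ℝ => t ^ e) atTop (𝓝 0) := by
    simpa using tendsto_rpow_neg_atTop (neg_pos.mpr he)
  have h := (((hzero (sub_neg.mpr hpr)).mul_const K).add
    ((hzero (sub_neg.mpr hqr)).mul_const M)).sub ((hzero (by linarith : 1 - r - γ < 0)).mul_const L)
  rw [zero_mul, zero_mul, zero_mul, add_zero, sub_zero] at h
  exact h

end NehariFibering

open NehariFibering in
theorem stmt_7_general (p q r γ K M L N lam t₀ : ℝ) (hp : 1 < p) (hpq : p < q) (hqr : q < r)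
    (hγ0 : 0 < γ) (hK : 0 ≤ K) (hM : 0 ≤ M) (hL : 0 < L)
    (hlam : 0 < lam) (hN : 0 < N)
    (Φ : ℝ → ℝ) (hΦ : Φ = fun t => t ^ (p - r) * K + t ^ (q - r) * M - t ^ (1 - r - γ) * L)
    (ht₀ : 0 < t₀)
    (hgt : lam * N < Φ t₀) :
    ∃ t₁ t₂ : ℝ, 0 < t₁ ∧ t₁ < t₀ ∧ t₀ < t₂ ∧
      Φ t₁ = lam * N ∧ Φ t₂ = lam * N ∧
      0 < deriv Φ t₁ ∧ deriv Φ t₂ < 0 := by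
  obtain rfl : Φ = phi p q r γ K M L := hΦ
  have hderiv : ∀ t ∈ Ioi (0 : ℝ), HasDerivAt (phi p q r γ K M L)
      (t ^ (-r - γ) * slope p q r γ K M L t) t := fun t ht => hasDerivAt_phi ht
  have hw : ∀ t ∈ Ioi (0 : ℝ), 0 < t ^ (-r - γ) := fun t ht => Real.rpow_pos_of_pos ht _
  have hslope : AntitoneOn (slope p q r γ K M L) (Ioi 0) :=
    antitoneOn_slope (by linarith) (by linarith) (hpq.trans hqr).le hqr.le hK hM
  obtain ⟨a, ⟨ha, hat₀⟩, hΦa⟩ : ∃ a ∈ Ioo 0 t₀, phi p q r γ K M L a < lam * N :=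
    ((eventually_phi_neg (by linarith) (by linarith) hL).and (Ioo_mem_nhdsGT ht₀)).exists.imp
      fun a h => ⟨h.2, h.1.trans (by positivity)⟩
  obtain ⟨b, hΦb, ht₀b⟩ : ∃ b, phi p q r γ K M L b < lam * N ∧ t₀ < b :=
    (((tendsto_phi_atTop (hpq.trans hqr) hqr (by linarith)).eventually
      (gt_mem_nhds (by positivity))).and (eventually_gt_atTop t₀)).exists
  obtain ⟨t₁, ⟨hat₁, ht₁t₀⟩, hΦt₁, hd₁⟩ := exists_mem_Ioo_eq_deriv_pos_of_hasDerivAt_mul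
    ordConnected_Ioi hderiv hw hslope ha ht₀ hat₀.le ⟨hΦa, hgt⟩
  obtain ⟨t₂, ⟨ht₀t₂, -⟩, hΦt₂, hd₂⟩ := exists_mem_Ioo_eq_deriv_neg_of_hasDerivAt_mul
    ordConnected_Ioi hderiv hw hslope ht₀ (ht₀.trans ht₀b) ht₀b.le ⟨hΦb, hgt⟩
  exact ⟨t₁, t₂, ha.trans hat₁, ht₁t₀, ht₀t₂, hΦt₁, hΦt₂, hd₁, hd₂⟩

theorem stmt_7 (p q r γ K M L N lam t₀ : ℝ) (hp : 1 < p) (hpq : p < q) (hqr : q < r)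
    (hγ0 : 0 < γ) (hγ1 : γ < 1) (hK : 0 ≤ K) (hM : 0 ≤ M) (hL : 0 < L)
    (hlam : 0 < lam) (hN : 0 < N)
    (Φ : ℝ → ℝ) (hΦ : Φ = fun t => t ^ (p - r) * K + t ^ (q - r) * M - t ^ (1 - r - γ) * L)
    (ht₀ : 0 < t₀) (hmax : ∀ t : ℝ, 0 < t → Φ t ≤ Φ t₀)
    (hgt : lam * N < Φ t₀) :
    ∃ t₁ t₂ : ℝ, 0 < t₁ ∧ t₁ < t₀ ∧ t₀ < t₂ ∧
      Φ t₁ = lam * N ∧ Φ t₂ = lam * N ∧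
      0 < deriv Φ t₁ ∧ deriv Φ t₂ < 0 :=
  stmt_7_general p q r γ K M L N lam t₀ hp hpq hqr hγ0 hK hM hL hlam hN Φ hΦ ht₀ hgt
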